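/- arXiv:2412.08964 — 4 statements merged into one kernel-verified Lean document; each statement's English description precedes it below -/
import Mathlib

section
/- Let b ≥ 2 be an integer and θ ∈ (0,1). Let (a_k(q))_{q∈ℤ} be strictly positive, summable sequences satisfying the recursion a_{k+1}(q) = θ^{q²} · ∑_{ℓ₁+⋯+ℓ_b = q} ∏_{i=1}^b a_k(ℓ_i). Then for every k and q ≥ 0, a_{k+1}(q+1)/a_{k+1}(q) ≤ b · θ^{(q+1)² - q²} · sup_{ℓ≥0} a_k(ℓ+1)/a_k(ℓ), provided the supremum is finite. -/
open scoped BigOperators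

/-- Ratio-contraction estimate for the renormalization recursion of Fourier
coefficients: if `a_{k+1}(q) = θ^{q²} ∑_{ℓ₁+⋯+ℓ_b=q} ∏ a_k(ℓᵢ)` then
`a_{k+1}(q+1)/a_{k+1}(q) ≤ b θ^{(q+1)²-q²} sup_{ℓ≥0} a_k(ℓ+1)/a_k(ℓ)`. -/
theorem stmt2 (b : ℕ) (hb : 2 ≤ b) (θ : ℝ) (hθ0 : 0 < θ) (hθ1 : θ < 1)
    (a : ℕ → ℤ → ℝ) (hpos : ∀ k (q : ℤ), 0 < a k q)
    (hsum : ∀ k, Summable (a k))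
    (hsumt : ∀ k (q : ℤ),
      Summable (fun ℓ : {ℓ : Fin b → ℤ // ∑ i, ℓ i = q} => ∏ i, a k (ℓ.1 i)))
    (hrec : ∀ k (q : ℤ), a (k + 1) q =
      θ ^ (q.natAbs ^ 2) * ∑' ℓ : {ℓ : Fin b → ℤ // ∑ i, ℓ i = q}, ∏ i, a k (ℓ.1 i))
    (k q : ℕ) (c : ℝ) (hc : ∀ ℓ : ℕ, a k ((ℓ : ℤ) + 1) / a k ℓ ≤ c) :
    a (k + 1) ((q : ℤ) + 1) / a (k + 1) q ≤ (b : ℝ) * θ ^ ((q + 1) ^ 2 - q ^ 2) * c := by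
  classical
  have hc0 : 0 < c :=
    lt_of_lt_of_le (div_pos (hpos k ((0 : ℤ) + 1)) (hpos k 0)) (by simpa using hc 0)
  have hbpos : (0 : ℕ) < b := by omega
  set T1 := {ℓ : Fin b → ℤ // ∑ i, ℓ i = (q : ℤ) + 1} with hT1
  set T0 := {ℓ : Fin b → ℤ // ∑ i, ℓ i = (q : ℤ)} with hT0
  -- every tuple summing to q+1 has a positive entry
  have hex : ∀ ℓ : T1, (Finset.univ.filter (fun i => 1 ≤ ℓ.1 i)).Nonempty := by
    intro ℓ
    by_contra h
    rw [Finset.not_nonempty_iff_eq_empty, Finset.filter_eq_empty_iff] at h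
    have h2 : ∑ i, ℓ.1 i ≤ 0 := Finset.sum_nonpos fun i _ => by
      have := h (Finset.mem_univ i); omega
    have h3 : ∑ i, ℓ.1 i = (q : ℤ) + 1 := ℓ.2
    have h4 : (0 : ℤ) ≤ (q : ℤ) := Int.natCast_nonneg q
    omega
  -- the injection T1 → Fin b × T0
  let idx : T1 → Fin b := fun ℓ => (Finset.univ.filter (fun i => 1 ≤ ℓ.1 i)).min' (hex ℓ)
  have hidx : ∀ ℓ : T1, 1 ≤ ℓ.1 (idx ℓ) := by
    intro ℓ
    have := (Finset.univ.filter (fun i => 1 ≤ ℓ.1 i)).min'_mem (hex ℓ)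
    simpa using this
  let F : T1 → Fin b × T0 := fun ℓ =>
    (idx ℓ, ⟨Function.update ℓ.1 (idx ℓ) (ℓ.1 (idx ℓ) - 1), by
      rw [Finset.sum_update_of_mem (Finset.mem_univ _)]
      have h1 : ∑ i, ℓ.1 i = (q : ℤ) + 1 := ℓ.2
      rw [Finset.sum_eq_add_sum_sdiff_singleton_of_mem (Finset.mem_univ (idx ℓ)) ℓ.1] at h1
      omega⟩)
  have hFinj : Function.Injective F := by
    intro ℓ₁ ℓ₂ h
    have hi : idx ℓ₁ = idx ℓ₂ := congrArg Prod.fst h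
    have hu : Function.update ℓ₁.1 (idx ℓ₁) (ℓ₁.1 (idx ℓ₁) - 1)
        = Function.update ℓ₂.1 (idx ℓ₂) (ℓ₂.1 (idx ℓ₂) - 1) :=
      congrArg Subtype.val (congrArg Prod.snd h)
    rw [hi] at hu
    apply Subtype.ext
    funext j
    have hj := congrFun hu j
    by_cases hji : j = idx ℓ₂
    · subst hji
      simp only [Function.update_self] at hj
      omega
    · rwa [Function.update_of_ne hji, Function.update_of_ne hji] at hj
  -- pointwise bound
  have hbound : ∀ ℓ : T1, (∏ i, a k (ℓ.1 i)) ≤ c * ∏ i, a k ((F ℓ).2.1 i) := by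
    intro ℓ
    set i0 := idx ℓ with hi0
    have h1 : (∏ i, a k (ℓ.1 i))
        = a k (ℓ.1 i0) * ∏ i ∈ Finset.univ \ {i0}, a k (ℓ.1 i) :=
      Finset.prod_eq_mul_prod_sdiff_singleton_of_mem (Finset.mem_univ i0) _
    have h2 : (∏ i, a k ((F ℓ).2.1 i))
        = a k (ℓ.1 i0 - 1) * ∏ i ∈ Finset.univ \ {i0}, a k (ℓ.1 i) := by
      rw [Finset.prod_eq_mul_prod_sdiff_singleton_of_mem (Finset.mem_univ i0)]
      show a k (Function.update ℓ.1 i0 (ℓ.1 i0 - 1) i0) * _ = _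
      rw [Function.update_self]
      congr 1
      apply Finset.prod_congr rfl
      intro j hj
      have : j ≠ i0 := by simp [Finset.mem_sdiff] at hj; tauto
      show a k (Function.update ℓ.1 i0 (ℓ.1 i0 - 1) j) = _
      rw [Function.update_of_ne this]
    have hstep : a k (ℓ.1 i0) ≤ c * a k (ℓ.1 i0 - 1) := by
      have hge : 1 ≤ ℓ.1 i0 := hidx ℓ
      set n : ℕ := (ℓ.1 i0 - 1).toNat with hn
      have hn' : (n : ℤ) = ℓ.1 i0 - 1 := Int.toNat_of_nonneg (by omega)
      have := hc n
      rw [hn'] at this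
      have heq : ℓ.1 i0 - 1 + 1 = ℓ.1 i0 := by ring
      rw [heq] at this
      exact (div_le_iff₀ (hpos k _)).mp this
    have hP : (0 : ℝ) ≤ ∏ i ∈ Finset.univ \ {i0}, a k (ℓ.1 i) :=
      Finset.prod_nonneg fun i _ => (hpos k _).le
    rw [h1, h2]
    calc a k (ℓ.1 i0) * ∏ i ∈ Finset.univ \ {i0}, a k (ℓ.1 i)
        ≤ (c * a k (ℓ.1 i0 - 1)) * ∏ i ∈ Finset.univ \ {i0}, a k (ℓ.1 i) :=
          mul_le_mul_of_nonneg_right hstep hP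
      _ = c * (a k (ℓ.1 i0 - 1) * ∏ i ∈ Finset.univ \ {i0}, a k (ℓ.1 i)) := by ring
  -- summability of the dominating function on the product
  have hf0 : Summable (fun ℓ : T0 => ∏ i, a k (ℓ.1 i)) := hsumt k q
  have hfprod : Summable (fun p : Fin b × T0 => c * ∏ i, a k (p.2.1 i)) := by
    apply (summable_prod_of_nonneg ?_).2
    · constructor
      · intro i; exact hf0.mul_left c
      · exact Summable.of_finite
    · intro p
      exact mul_nonneg hc0.le (Finset.prod_nonneg fun i _ => (hpos k _).le)
  -- the key sum estimate
  have hkey : (∑' ℓ : T1, ∏ i, a k (ℓ.1 i))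
      ≤ (b : ℝ) * (c * ∑' ℓ : T0, ∏ i, a k (ℓ.1 i)) := by
    have h1 : (∑' ℓ : T1, ∏ i, a k (ℓ.1 i))
        ≤ ∑' p : Fin b × T0, c * ∏ i, a k (p.2.1 i) := by
      apply Summable.tsum_le_tsum_of_inj F hFinj
      · intro p _
        exact mul_nonneg hc0.le (Finset.prod_nonneg fun i _ => (hpos k _).le)
      · exact hbound
      · exact hsumt k ((q : ℤ) + 1)
      · exact hfprod
    have h2 : (∑' p : Fin b × T0, c * ∏ i, a k (p.2.1 i))
        = (b : ℝ) * (c * ∑' ℓ : T0, ∏ i, a k (ℓ.1 i)) := by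
      rw [Summable.tsum_prod' hfprod (fun i => hf0.mul_left c)]
      simp only [tsum_mul_left]
      rw [tsum_fintype]
      simp only [Finset.sum_const, Finset.card_univ, Fintype.card_fin, nsmul_eq_mul]
      ring
    exact h1.trans (le_of_eq h2)
  -- put everything together
  have hnat1 : ((q : ℤ) + 1).natAbs = q + 1 := by
    have : ((q : ℤ) + 1) = ((q + 1 : ℕ) : ℤ) := by push_cast; ring
    rw [this, Int.natAbs_natCast]
  have hnat0 : ((q : ℤ)).natAbs = q := Int.natAbs_natCast q
  have hexp : θ ^ ((q + 1) ^ 2) = θ ^ (q ^ 2) * θ ^ ((q + 1) ^ 2 - q ^ 2) := by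
    rw [← pow_add]
    congr 1
    have hle : q ^ 2 ≤ (q + 1) ^ 2 := Nat.pow_le_pow_left (by omega) 2
    omega
  rw [div_le_iff₀ (hpos (k + 1) q), hrec k ((q : ℤ) + 1), hrec k (q : ℤ), hnat1, hnat0, hexp]
  have hθp : (0 : ℝ) < θ ^ (q ^ 2) * θ ^ ((q + 1) ^ 2 - q ^ 2) := by positivity
  calc θ ^ (q ^ 2) * θ ^ ((q + 1) ^ 2 - q ^ 2) * (∑' ℓ : T1, ∏ i, a k (ℓ.1 i))
      ≤ θ ^ (q ^ 2) * θ ^ ((q + 1) ^ 2 - q ^ 2)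
          * ((b : ℝ) * (c * ∑' ℓ : T0, ∏ i, a k (ℓ.1 i))) :=
        mul_le_mul_of_nonneg_left hkey hθp.le
    _ = (b : ℝ) * θ ^ ((q + 1) ^ 2 - q ^ 2) * c
          * (θ ^ (q ^ 2) * ∑' ℓ : T0, ∏ i, a k (ℓ.1 i)) := by ring
end

section
/- Let β > 0, σ² > 0, b ≥ 1 and v, w smooth 1-periodic with e^{-w(z)} = ∫ e^{-bv(z+ζ)} dμ(ζ), μ = N(0, σ²/β), and let β₀ := β/σ². Then ∫ e^{-bv(φ+ζ)} ζ² dμ(ζ) = (1/β₀ + (1/β₀²)[w'(φ)² - w''(φ)]) e^{-w(φ)} for all φ ∈ ℝ. -/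
open MeasureTheory ProbabilityTheory Real Filter Function
open scoped NNReal ENNReal

namespace Stmt8Aux

lemma integral_gauss {V : ℝ≥0} (hV : V ≠ 0) (g : ℝ → ℝ) :
    ∫ x, g x ∂(gaussianReal 0 V) = ∫ x, g x * gaussianPDFReal 0 V x := by
  rw [gaussianReal_of_var_ne_zero _ hV]
  have h : (gaussianPDF 0 V) = fun x => ((Real.toNNReal (gaussianPDFReal 0 V x)) : ℝ≥0∞) := rfl
  rw [h, integral_withDensity_eq_integral_smul
    ((measurable_gaussianPDFReal 0 V).real_toNNReal) g]
  congr 1; ext x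
  rw [NNReal.smul_def, smul_eq_mul, Real.coe_toNNReal _ (gaussianPDFReal_nonneg _ _ _), mul_comm]

lemma integrable_gauss_iff {V : ℝ≥0} (hV : V ≠ 0) (g : ℝ → ℝ) :
    Integrable g (gaussianReal 0 V) ↔
      Integrable (fun x => g x * gaussianPDFReal 0 V x) := by
  rw [gaussianReal_of_var_ne_zero _ hV,
    integrable_withDensity_iff (measurable_gaussianPDF 0 V)
      (ae_of_all _ fun x => ENNReal.ofReal_lt_top)]
  refine integrable_congr (ae_of_all _ fun x => ?_)
  simp only [gaussianPDF_def, ENNReal.toReal_ofReal (gaussianPDFReal_nonneg 0 V x)]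

lemma continuous_pdf (m : ℝ) (V : ℝ≥0) : Continuous (gaussianPDFReal m V) := by
  rw [gaussianPDFReal_def]
  fun_prop

lemma hasDerivAt_pdf {V : ℝ≥0} (hV : 0 < (V : ℝ)) (x : ℝ) :
    HasDerivAt (gaussianPDFReal 0 V)
      (-(x / (V : ℝ)) * gaussianPDFReal 0 V x) x := by
  have hfun : gaussianPDFReal 0 V
      = fun y => (Real.sqrt (2 * π * (V : ℝ)))⁻¹ * Real.exp (-(y ^ 2 / (2 * (V : ℝ)))) := by
    funext y; simp [gaussianPDFReal, neg_div]
  rw [hfun]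
  have h1 : HasDerivAt (fun y : ℝ => -(y ^ 2 / (2 * (V : ℝ))))
      (-(2 * x ^ 1 / (2 * (V : ℝ)))) x :=
    ((hasDerivAt_pow 2 x).div_const _).neg
  have h2 := (h1.exp).const_mul ((Real.sqrt (2 * π * (V : ℝ)))⁻¹)
  convert h2 using 1
  · rfl
  · rfl
  · beta_reduce; ring

lemma pdf_eq {V : ℝ≥0} (hV : 0 < (V : ℝ)) (x : ℝ) :
    gaussianPDFReal 0 V x
      = (Real.sqrt (2 * π * (V : ℝ)))⁻¹ * Real.exp (-(2 * (V : ℝ))⁻¹ * x ^ 2) := by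
  simp only [gaussianPDFReal, sub_zero]
  congr 1
  field_simp

lemma integrable_abs_mul_pdf {V : ℝ≥0} (hV : 0 < (V : ℝ)) :
    Integrable (fun x => |x| * gaussianPDFReal 0 V x) := by
  have hb : 0 < (2 * (V : ℝ))⁻¹ := by
    apply inv_pos.mpr; linarith
  have h1 : Integrable (fun x : ℝ => |x * Real.exp (-(2 * (V : ℝ))⁻¹ * x ^ 2)|) :=
    (integrable_mul_exp_neg_mul_sq hb).abs
  have h2 := h1.const_mul ((Real.sqrt (2 * π * (V : ℝ)))⁻¹)
  refine h2.congr (ae_of_all _ fun x => ?_)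
  simp only [pdf_eq hV, abs_mul, Real.abs_exp]
  ring

lemma integrable_sq_mul_pdf {V : ℝ≥0} (hV : 0 < (V : ℝ)) :
    Integrable (fun x => x ^ 2 * gaussianPDFReal 0 V x) := by
  have hb : 0 < (2 * (V : ℝ))⁻¹ := by
    apply inv_pos.mpr; linarith
  have hb2 : 0 < (2 * (V : ℝ))⁻¹ / 2 := by linarith
  have hInt : Integrable (fun x : ℝ => Real.exp (-((2 * (V : ℝ))⁻¹ / 2) * x ^ 2)) :=
    integrable_exp_neg_mul_sq hb2
  have hmain := (hInt.const_mul ((Real.sqrt (2 * π * (V : ℝ)))⁻¹ * (2 / ((2 * (V : ℝ))⁻¹)))).mono'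
    (Continuous.aestronglyMeasurable (by
      exact (continuous_pow 2).mul (continuous_pdf 0 V)))
    (ae_of_all _ fun x => ?_)
  · exact hmain
  · set b := (2 * (V : ℝ))⁻¹ with hbdef
    set c := (Real.sqrt (2 * π * (V : ℝ)))⁻¹ with hcdef
    have hc : 0 ≤ c := by positivity
    have hxb : x ^ 2 ≤ 2 / b * Real.exp (b / 2 * x ^ 2) := by
      have := Real.add_one_le_exp (b / 2 * x ^ 2)
      have h' : b / 2 * x ^ 2 ≤ Real.exp (b / 2 * x ^ 2) := by linarith
      calc x ^ 2 = 2 / b * (b / 2 * x ^ 2) := by field_simp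
        _ ≤ 2 / b * Real.exp (b / 2 * x ^ 2) :=
            mul_le_mul_of_nonneg_left h' (div_nonneg two_pos.le hb.le)
    have hnorm : ‖x ^ 2 * gaussianPDFReal 0 V x‖
        = x ^ 2 * (c * Real.exp (-b * x ^ 2)) := by
      rw [Real.norm_eq_abs,
        abs_of_nonneg (mul_nonneg (sq_nonneg x) (gaussianPDFReal_nonneg _ _ _)), pdf_eq hV]
    rw [show ((fun a : ℝ => a ^ 2) * gaussianPDFReal 0 V) x = x ^ 2 * gaussianPDFReal 0 V x from rfl, hnorm]
    calc x ^ 2 * (c * Real.exp (-b * x ^ 2))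
        ≤ (2 / b * Real.exp (b / 2 * x ^ 2)) * (c * Real.exp (-b * x ^ 2)) :=
          mul_le_mul_of_nonneg_right hxb
            (mul_nonneg hc (Real.exp_pos _).le)
      _ = c * (2 / b) * Real.exp (-(b / 2) * x ^ 2) := by
          rw [show -(b / 2) * x ^ 2 = b / 2 * x ^ 2 + -b * x ^ 2 by ring, Real.exp_add]
          ring

lemma stein {V : ℝ≥0} (hV : 0 < (V : ℝ)) {g g' : ℝ → ℝ}
    (hg : ∀ x, HasDerivAt g (g' x) x)
    (h1 : Integrable (fun x => g' x * gaussianPDFReal 0 V x))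
    (h2 : Integrable (fun x => g x * x * gaussianPDFReal 0 V x))
    (h3 : Integrable (fun x => g x * gaussianPDFReal 0 V x)) :
    ∫ x, g' x * gaussianPDFReal 0 V x
      = ((V : ℝ))⁻¹ * ∫ x, g x * x * gaussianPDFReal 0 V x := by
  set p := gaussianPDFReal 0 V with hpdef
  have hp : ∀ x, HasDerivAt p (-(x / (V : ℝ)) * p x) x := hasDerivAt_pdf hV
  have huv' : Integrable (g * fun x => -(x / (V : ℝ)) * p x) := by
    refine (h2.const_mul (-((V : ℝ))⁻¹)).congr (ae_of_all _ fun x => ?_)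
    simp only [Pi.mul_apply]
    rw [div_eq_mul_inv]
    ring
  have hu'v : Integrable (g' * p) := h1.congr (ae_of_all _ fun x => rfl)
  have huv : Integrable (g * p) := h3.congr (ae_of_all _ fun x => rfl)
  have key := integral_mul_deriv_eq_deriv_mul_of_integrable (fun x _ => hg x) (fun x _ => hp x) huv' hu'v huv
  have hL : ∫ x, g x * (-(x / (V : ℝ)) * p x) = -((V : ℝ))⁻¹ * ∫ x, g x * x * p x := by
    rw [← integral_const_mul]
    congr 1; funext x
    rw [div_eq_mul_inv]
    ring
  rw [hL] at key
  linear_combination key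

end Stmt8Aux

open Stmt8Aux

/-- Second-moment Gaussian identity: if `e^{-w(z)} = ∫ e^{-b v(z+ζ)} dμ(ζ)` with
`μ = N(0, σ²/β)` and `β₀ = β/σ²`, then
`∫ e^{-b v(φ+ζ)} ζ² dμ(ζ) = (1/β₀ + (1/β₀²)(w'(φ)² - w''(φ))) e^{-w(φ)}`. -/
theorem stmt8 (β σ2 b β₀ : ℝ) (hβ : 0 < β) (hσ : 0 < σ2) (hb : 1 ≤ b)
    (hβ₀ : β₀ = β / σ2)
    (v w : ℝ → ℝ) (hv : ContDiff ℝ (⊤ : ℕ∞) v) (hw : ContDiff ℝ (⊤ : ℕ∞) w)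
    (hvper : Function.Periodic v 1) (hwper : Function.Periodic w 1)
    (hrel : ∀ z : ℝ, Real.exp (-(w z)) =
      ∫ ζ, Real.exp (-(b * v (z + ζ)))
        ∂(gaussianReal 0 (Real.toNNReal (σ2 / β)))) :
    ∀ φ : ℝ,
      (∫ ζ, Real.exp (-(b * v (φ + ζ))) * ζ ^ 2
          ∂(gaussianReal 0 (Real.toNNReal (σ2 / β)))) =
        (1 / β₀ + (1 / β₀ ^ 2) * ((deriv w φ) ^ 2 - deriv (deriv w) φ)) *
          Real.exp (-(w φ)) := by
  intro φ
  have hτ : 0 < σ2 / β := div_pos hσ hβ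
  set V : ℝ≥0 := Real.toNNReal (σ2 / β) with hVdef
  have hVcoe : ((V : ℝ≥0) : ℝ) = σ2 / β := Real.coe_toNNReal _ hτ.le
  have hVpos : 0 < ((V : ℝ≥0) : ℝ) := by rw [hVcoe]; exact hτ
  have hV : V ≠ 0 := by
    intro h
    rw [h] at hVcoe
    simp at hVcoe
    linarith
  -- smoothness facts
  have hvd : Differentiable ℝ v := hv.differentiable (by simp)
  have hv' : Continuous (deriv v) :=
    ((contDiff_infty_iff_deriv.mp (hv.of_le (by simp))).2).continuous
  have hwd : Differentiable ℝ w := hw.differentiable (by simp)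
  have hw'd : Differentiable ℝ (deriv w) :=
    ((contDiff_infty_iff_deriv.mp (hw.of_le (by simp))).2).differentiable (by simp)
  -- periodicity of deriv v and boundedness
  have hvper' : Function.Periodic (deriv v) 1 := by
    intro x
    have h : (fun y => v (y + 1)) = v := funext fun y => hvper y
    calc deriv v (x + 1) = deriv (fun y => v (y + 1)) x := (deriv_comp_add_const v 1 x).symm
      _ = deriv v x := by rw [h]
  obtain ⟨Mv, hMv⟩ : ∃ M, ∀ x, |v x| ≤ M := by
    obtain ⟨C, hC⟩ := isBounded_iff_forall_norm_le.mp
      (hvper.isBounded_of_continuous one_ne_zero hv.continuous)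
    exact ⟨C, fun x => by simpa [Real.norm_eq_abs] using hC _ ⟨x, rfl⟩⟩
  obtain ⟨Mv', hMv'⟩ : ∃ M, ∀ x, |deriv v x| ≤ M := by
    obtain ⟨C, hC⟩ := isBounded_iff_forall_norm_le.mp
      (hvper'.isBounded_of_continuous one_ne_zero hv')
    exact ⟨C, fun x => by simpa [Real.norm_eq_abs] using hC _ ⟨x, rfl⟩⟩
  have hb0 : 0 < b := lt_of_lt_of_le one_pos hb
  have hMv'0 : 0 ≤ Mv' := le_trans (abs_nonneg _) (hMv' 0)
  set C₀ : ℝ := Real.exp (b * Mv) with hC₀def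
  have hC₀pos : 0 < C₀ := Real.exp_pos _
  have hFb : ∀ x, Real.exp (-(b * v x)) ≤ C₀ := by
    intro x
    apply Real.exp_le_exp.mpr
    have h1 := (abs_le.mp (hMv x)).1
    nlinarith
  set C₁ : ℝ := b * Mv' * C₀ with hC₁def
  -- the functions F and F'
  set F : ℝ → ℝ → ℝ := fun z ζ => Real.exp (-(b * v (z + ζ))) with hFdef
  set F' : ℝ → ℝ → ℝ := fun z ζ => -(b * deriv v (z + ζ)) * F z ζ with hF'def
  have hFpos : ∀ z ζ, 0 < F z ζ := fun z ζ => Real.exp_pos _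
  have hFle : ∀ z ζ, F z ζ ≤ C₀ := fun z ζ => hFb _
  have hFc : ∀ z, Continuous (fun ζ => F z ζ) := by
    intro z
    simp only [hFdef]
    exact (continuous_const.mul (hv.continuous.comp (continuous_const.add continuous_id))).neg.rexp
  have hF'c : ∀ z, Continuous (fun ζ => F' z ζ) := by
    intro z
    simp only [hF'def, hFdef]
    exact ((continuous_const.mul (hv'.comp (continuous_const.add continuous_id))).neg).mul
      (continuous_const.mul (hv.continuous.comp (continuous_const.add continuous_id))).neg.rexp
  have hF'b : ∀ z ζ, ‖F' z ζ‖ ≤ C₁ := by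
    intro z ζ
    rw [Real.norm_eq_abs]
    have h1 : |F' z ζ| = b * |deriv v (z + ζ)| * F z ζ := by
      simp only [hF'def]
      rw [abs_mul, abs_neg, abs_mul, abs_of_pos hb0, abs_of_pos (hFpos z ζ)]
    rw [h1, hC₁def]
    have h2 : b * |deriv v (z + ζ)| ≤ b * Mv' :=
      mul_le_mul_of_nonneg_left (hMv' _) hb0.le
    calc b * |deriv v (z + ζ)| * F z ζ
        ≤ b * Mv' * F z ζ := mul_le_mul_of_nonneg_right h2 (hFpos z ζ).le
      _ ≤ b * Mv' * C₀ :=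
          mul_le_mul_of_nonneg_left (hFle z ζ) (mul_nonneg hb0.le hMv'0)
  -- derivatives in z and ζ
  have hderivz : ∀ z ζ, HasDerivAt (fun z => F z ζ) (F' z ζ) z := by
    intro z ζ
    have h1 : HasDerivAt (fun z : ℝ => z + ζ) 1 z := (hasDerivAt_id z).add_const ζ
    have h2 : HasDerivAt (fun z => v (z + ζ)) (deriv v (z + ζ)) z := by
      simpa [Function.comp_def] using (hvd (z + ζ)).hasDerivAt.comp z h1
    have h3 := ((h2.const_mul b).neg).exp
    simp only [hF'def, hFdef]
    convert h3 using 1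
    · rfl
    · simp only [Pi.neg_apply]; ring
  have hderivζ : ∀ z ζ, HasDerivAt (fun ζ => F z ζ) (F' z ζ) ζ := by
    intro z ζ
    have h1 : HasDerivAt (fun ζ : ℝ => z + ζ) 1 ζ := (hasDerivAt_id ζ).const_add z
    have h2 : HasDerivAt (fun ζ => v (z + ζ)) (deriv v (z + ζ)) ζ := by
      simpa [Function.comp_def] using (hvd (z + ζ)).hasDerivAt.comp ζ h1
    have h3 := ((h2.const_mul b).neg).exp
    simp only [hF'def, hFdef]
    convert h3 using 1
    · rfl
    · simp only [Pi.neg_apply]; ring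
  -- density facts
  set p : ℝ → ℝ := gaussianPDFReal 0 V with hpdef
  have hpc : Continuous p := continuous_pdf 0 V
  have hpnn : ∀ x, 0 ≤ p x := fun x => gaussianPDFReal_nonneg _ _ _
  have hIp : Integrable p := integrable_gaussianPDFReal 0 V
  have hIabs : Integrable (fun x => |x| * p x) := integrable_abs_mul_pdf hVpos
  have hIsq : Integrable (fun x => x ^ 2 * p x) := integrable_sq_mul_pdf hVpos
  -- integrability of the various products against the density
  have hIntFp : ∀ z, Integrable (fun ζ => F z ζ * p ζ) := by
    intro z
    refine (hIp.const_mul C₀).mono' (((hFc z).mul hpc).aestronglyMeasurable)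
      (ae_of_all _ fun ζ => ?_)
    rw [Real.norm_eq_abs, abs_mul, abs_of_pos (hFpos z ζ), abs_of_nonneg (hpnn ζ)]
    exact mul_le_mul_of_nonneg_right (hFle z ζ) (hpnn ζ)
  have hIntF'p : ∀ z, Integrable (fun ζ => F' z ζ * p ζ) := by
    intro z
    refine (hIp.const_mul C₁).mono' (((hF'c z).mul hpc).aestronglyMeasurable)
      (ae_of_all _ fun ζ => ?_)
    rw [Real.norm_eq_abs, abs_mul, abs_of_nonneg (hpnn ζ)]
    refine mul_le_mul_of_nonneg_right ?_ (hpnn ζ)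
    simpa [Real.norm_eq_abs] using hF'b z ζ
  have hIntFxp : ∀ z, Integrable (fun ζ => F z ζ * ζ * p ζ) := by
    intro z
    refine (hIabs.const_mul C₀).mono'
      ((((hFc z).mul continuous_id).mul hpc).aestronglyMeasurable)
      (ae_of_all _ fun ζ => ?_)
    rw [Real.norm_eq_abs, abs_mul, abs_mul, abs_of_pos (hFpos z ζ), abs_of_nonneg (hpnn ζ)]
    have h1 : F z ζ * |ζ| ≤ C₀ * |ζ| := mul_le_mul_of_nonneg_right (hFle z ζ) (abs_nonneg ζ)
    calc F z ζ * |ζ| * p ζ ≤ C₀ * |ζ| * p ζ := mul_le_mul_of_nonneg_right h1 (hpnn ζ)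
      _ = C₀ * (|ζ| * p ζ) := by ring
  have hIntF'xp : ∀ z, Integrable (fun ζ => F' z ζ * ζ * p ζ) := by
    intro z
    refine (hIabs.const_mul C₁).mono'
      ((((hF'c z).mul continuous_id).mul hpc).aestronglyMeasurable)
      (ae_of_all _ fun ζ => ?_)
    rw [Real.norm_eq_abs, abs_mul, abs_mul, abs_of_nonneg (hpnn ζ)]
    have hF'le : |F' z ζ| ≤ C₁ := by simpa [Real.norm_eq_abs] using hF'b z ζ
    have h1 : |F' z ζ| * |ζ| ≤ C₁ * |ζ| := mul_le_mul_of_nonneg_right hF'le (abs_nonneg ζ)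
    calc |F' z ζ| * |ζ| * p ζ ≤ C₁ * |ζ| * p ζ := mul_le_mul_of_nonneg_right h1 (hpnn ζ)
      _ = C₁ * (|ζ| * p ζ) := by ring
  have hIntFxxp : Integrable (fun ζ => F φ ζ * ζ * ζ * p ζ) := by
    refine (hIsq.const_mul C₀).mono'
      (((((hFc φ).mul continuous_id).mul continuous_id).mul hpc).aestronglyMeasurable)
      (ae_of_all _ fun ζ => ?_)
    rw [Real.norm_eq_abs]
    have h1 : |F φ ζ * ζ * ζ * p ζ| = F φ ζ * (ζ ^ 2 * p ζ) := by
      rw [abs_mul, abs_mul, abs_mul, abs_of_pos (hFpos φ ζ), abs_of_nonneg (hpnn ζ),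
        show F φ ζ * |ζ| * |ζ| * p ζ = F φ ζ * (|ζ| ^ 2 * p ζ) by ring, sq_abs]
    rw [h1]
    calc F φ ζ * (ζ ^ 2 * p ζ) ≤ C₀ * (ζ ^ 2 * p ζ) :=
          mul_le_mul_of_nonneg_right (hFle φ ζ)
            (mul_nonneg (sq_nonneg ζ) (hpnn ζ))
      _ = C₀ * (ζ ^ 2 * p ζ) := rfl
  -- Step A : differentiate under the integral sign in z
  have hFint : ∀ z, Integrable (fun ζ => F z ζ) (gaussianReal 0 V) := by
    intro z
    refine (integrable_const C₀).mono' ((hFc z).aestronglyMeasurable) (ae_of_all _ fun ζ => ?_)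
    rw [Real.norm_eq_abs, abs_of_pos (hFpos z ζ)]
    exact hFle z ζ
  have stepA : ∀ z, HasDerivAt (fun z => ∫ ζ, F z ζ ∂(gaussianReal 0 V))
      (∫ ζ, F' z ζ ∂(gaussianReal 0 V)) z := by
    intro z
    exact (hasDerivAt_integral_of_dominated_loc_of_deriv_le (F := F) (F' := F')
      (bound := fun _ => C₁) (Metric.ball_mem_nhds _ zero_lt_one)
      (Eventually.of_forall fun y => ((hFc y).aestronglyMeasurable))
      (hFint z) ((hF'c z).aestronglyMeasurable)
      (ae_of_all _ fun ζ y _ => hF'b y ζ)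
      (integrable_const C₁)
      (ae_of_all _ fun ζ y _ => hderivz y ζ)).2
  have hEfun : (fun z => ∫ ζ, F z ζ ∂(gaussianReal 0 V)) = fun z => Real.exp (-(w z)) := by
    funext z
    exact (hrel z).symm
  have hEderiv : ∀ z, HasDerivAt (fun z => Real.exp (-(w z)))
      (-deriv w z * Real.exp (-(w z))) z := by
    intro z
    have h := ((hwd z).hasDerivAt.neg).exp
    convert h using 1
    · rfl
    · simp only [Pi.neg_apply]; ring
  have E1 : ∀ z, (∫ ζ, F' z ζ ∂(gaussianReal 0 V)) = -deriv w z * Real.exp (-(w z)) := by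
    intro z
    have h := stepA z
    rw [hEfun] at h
    exact h.unique (hEderiv z)
  -- Stein step 1 : first moment identity at every z
  have E2 : ∀ z, (∫ ζ, F z ζ * ζ ∂(gaussianReal 0 V))
      = (V : ℝ) * (-deriv w z * Real.exp (-(w z))) := by
    intro z
    have hs := stein hVpos (g := fun ζ => F z ζ) (g' := fun ζ => F' z ζ)
      (fun ζ => hderivζ z ζ) (hIntF'p z) (hIntFxp z) (hIntFp z)
    have h2 : (∫ ζ, F' z ζ ∂(gaussianReal 0 V)) = ∫ x, F' z x * p x :=
      integral_gauss hV _
    have hVne : ((V : ℝ≥0) : ℝ) ≠ 0 := ne_of_gt hVpos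
    have h3 : ∫ x, F z x * x * p x = (V : ℝ) * ∫ x, F' z x * p x := by
      rw [hs]
      field_simp
      rfl
    rw [integral_gauss hV (fun ζ => F z ζ * ζ), h3, ← h2, E1 z]
  -- Step C : differentiate the first moment in z
  have hGint : Integrable (fun ζ => F φ ζ * ζ) (gaussianReal 0 V) := by
    rw [integrable_gauss_iff hV]
    exact hIntFxp φ
  have hboundint : Integrable (fun ζ => C₁ * |ζ|) (gaussianReal 0 V) := by
    rw [integrable_gauss_iff hV]
    exact (hIabs.const_mul C₁).congr (ae_of_all _ fun x => by ring)
  have stepC : HasDerivAt (fun z => ∫ ζ, F z ζ * ζ ∂(gaussianReal 0 V))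
      (∫ ζ, F' φ ζ * ζ ∂(gaussianReal 0 V)) φ := by
    exact (hasDerivAt_integral_of_dominated_loc_of_deriv_le (F := fun z ζ => F z ζ * ζ)
      (F' := fun z ζ => F' z ζ * ζ) (bound := fun ζ => C₁ * |ζ|) (Metric.ball_mem_nhds _ zero_lt_one)
      (Eventually.of_forall fun y => (((hFc y).mul continuous_id).aestronglyMeasurable))
      hGint (((hF'c φ).mul continuous_id).aestronglyMeasurable)
      (ae_of_all _ fun ζ y _ => by
        rw [Real.norm_eq_abs, abs_mul]
        exact mul_le_mul_of_nonneg_right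
          (by simpa [Real.norm_eq_abs] using hF'b y ζ) (abs_nonneg ζ))
      hboundint
      (ae_of_all _ fun ζ y _ => (hderivz y ζ).mul_const ζ)).2
  have hGfun : (fun z => ∫ ζ, F z ζ * ζ ∂(gaussianReal 0 V))
      = fun z => (V : ℝ) * (-deriv w z * Real.exp (-(w z))) := funext fun z => E2 z
  have hG'deriv : HasDerivAt (fun z => (V : ℝ) * (-deriv w z * Real.exp (-(w z))))
      ((V : ℝ) * ((deriv w φ) ^ 2 - deriv (deriv w) φ) * Real.exp (-(w φ))) φ := by
    have h1 : HasDerivAt (fun z => -deriv w z) (-(deriv (deriv w) φ)) φ :=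
      ((hw'd φ).hasDerivAt).neg
    have h2 := (h1.mul (hEderiv φ)).const_mul ((V : ℝ))
    convert h2 using 1
    · rfl
    · rfl
    · rfl
    · ring
  have E3 : (∫ ζ, F' φ ζ * ζ ∂(gaussianReal 0 V))
      = (V : ℝ) * ((deriv w φ) ^ 2 - deriv (deriv w) φ) * Real.exp (-(w φ)) := by
    have h := stepC
    rw [hGfun] at h
    exact h.unique hG'deriv
  -- Stein step 2 : second moment identity at φ
  have hstein2 := stein hVpos (g := fun ζ => F φ ζ * ζ)
    (g' := fun ζ => F' φ ζ * ζ + F φ ζ)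
    (fun ζ => by have h := (hderivζ φ ζ).mul (hasDerivAt_id ζ); simp at h; exact h)
    (((hIntF'xp φ).add (hIntFp φ)).congr (ae_of_all _ fun x => by
      simp only [Pi.add_apply, hpdef]; ring))
    (hIntFxxp.congr (ae_of_all _ fun x => by simp only [hpdef]))
    (hIntFxp φ)
  have hsplit : ∫ x, (F' φ x * x + F φ x) * p x
      = (∫ x, F' φ x * x * p x) + ∫ x, F φ x * p x := by
    rw [← integral_add (hIntF'xp φ) (hIntFp φ)]
    congr 1; funext x; ring
  have hμ1 : (∫ x, F' φ x * x * p x) = ∫ ζ, F' φ ζ * ζ ∂(gaussianReal 0 V) :=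
    (integral_gauss hV _).symm
  have hμ2 : (∫ x, F φ x * p x) = ∫ ζ, F φ ζ ∂(gaussianReal 0 V) :=
    (integral_gauss hV _).symm
  have hμ3 : (∫ x, (F φ x * x) * x * p x) = ∫ ζ, F φ ζ * ζ ^ 2 ∂(gaussianReal 0 V) := by
    rw [integral_gauss hV (fun ζ => F φ ζ * ζ ^ 2)]
    congr 1; funext x; ring
  have hF0 : (∫ ζ, F φ ζ ∂(gaussianReal 0 V)) = Real.exp (-(w φ)) := (hrel φ).symm
  have hVne : ((V : ℝ≥0) : ℝ) ≠ 0 := ne_of_gt hVpos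
  have hB : (∫ ζ, F φ ζ * ζ ^ 2 ∂(gaussianReal 0 V))
      = (V : ℝ) * ((∫ ζ, F' φ ζ * ζ ∂(gaussianReal 0 V)) + Real.exp (-(w φ))) := by
    have h := hstein2
    rw [hsplit, hμ1, hμ2, hF0, hμ3] at h
    rw [h]
    field_simp
  have hβ₀V : 1 / β₀ = ((V : ℝ≥0) : ℝ) := by
    rw [hβ₀, one_div, inv_div, hVcoe]
  have hβ₀V2 : 1 / β₀ ^ 2 = ((V : ℝ≥0) : ℝ) ^ 2 := by
    rw [show (1 : ℝ) / β₀ ^ 2 = (1 / β₀) ^ 2 by rw [div_pow, one_pow], hβ₀V]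
  show (∫ ζ, F φ ζ * ζ ^ 2 ∂(gaussianReal 0 V)) = _
  rw [hB, E3, hβ₀V, hβ₀V2]
  ring
end

section
/- Let η > 0 and a ≥ 0, and let (v_k)_{k≥1} be a nonnegative sequence. Suppose a nonnegative sequence (d_k)_{k≥2} satisfies d_k ≤ (1/k) ∑_{i=1}^{k-2} H_{i+1} d_{k-i} + a v_k for all k ≥ k₀, where H_i := ∑_{j≥i} h_j with h_j ≥ 0 satisfying k₀ ≥ ∑_{i≥1} e^{ηi} H_{i+1}, and suppose d_j ≤ a ∑_{i=0}^{j-2} e^{-ηi} v_{j-i} for all 2 ≤ j ≤ k₀. Then d_j ≤ a ∑_{i=0}^{j-2} e^{-ηi} v_{j-i} for all j ≥ 2. -/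
/-!
The majorant `B_j = a ∑_{i=0}^{j-2} e^{-ηi} v_{j-i}` is a supersolution of the recursion from
`k₀` on, so the bound propagates by strong induction (a comparison principle for
nonnegative kernels). Writing `B_j = a e^{-ηj} P_j` with the monotone partial sums
`P_j = ∑_{m=2}^{j} e^{ηm} v_m` gives `B_k = a v_k + Q` and `B_{k-i} ≤ e^{ηi} Q` with
`Q = a e^{-ηk} P_{k-1}`, so the memory term is at most `(1/k) ∑_i e^{ηi} H_{i+1} Q ≤ (k₀/k) Q ≤ Q`.
-/

open Finset Real

theorem le_of_sub_super_solution {d B e : ℕ → ℝ} {c : ℕ → ℕ → ℝ} {k₀ : ℕ}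
    (hc : ∀ k i, 0 ≤ c k i)
    (hd : ∀ k, k₀ < k → 2 ≤ k → d k ≤ ∑ i ∈ Icc 1 (k - 2), c k i * d (k - i) + e k)
    (hB : ∀ k, k₀ < k → 2 ≤ k → ∑ i ∈ Icc 1 (k - 2), c k i * B (k - i) + e k ≤ B k)
    (hbase : ∀ j, 2 ≤ j → j ≤ k₀ → d j ≤ B j) :
    ∀ j, 2 ≤ j → d j ≤ B j := by
  intro j hj
  induction j using Nat.strong_induction_on with
  | _ k ih =>
  rcases le_or_gt k k₀ with hk | hk
  · exact hbase k hj hk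
  calc d k ≤ ∑ i ∈ Icc 1 (k - 2), c k i * d (k - i) + e k := hd k hk hj
    _ ≤ ∑ i ∈ Icc 1 (k - 2), c k i * B (k - i) + e k := by
      gcongr with i hi
      · exact hc k i
      · have := mem_Icc.mp hi
        exact ih (k - i) (by omega) (by omega)
    _ ≤ B k := hB k hk hj

noncomputable def gronwallMajorant (η a : ℝ) (v : ℕ → ℝ) (j : ℕ) : ℝ :=
  a * ∑ i ∈ range (j - 1), exp (-η * i) * v (j - i)

section gronwallMajorant

variable {η a : ℝ} {v : ℕ → ℝ}

theorem gronwallMajorant_eq (j : ℕ) :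
    gronwallMajorant η a v j = a * exp (-η * j) * ∑ m ∈ Icc 2 j, exp (η * m) * v m := by
  rw [gronwallMajorant, mul_assoc]
  congr 1
  rw [mul_sum]
  refine sum_nbij' (fun i ↦ j - i) (fun m ↦ j - m) ?_ ?_ ?_ ?_ fun i hi ↦ ?_
  any_goals intro i hi; simp only [mem_range, mem_Icc] at hi ⊢; omega
  rw [Nat.cast_sub (by simp only [mem_range] at hi; omega), ← mul_assoc, ← exp_add]
  ring_nf

theorem gronwallMajorant_eq_add {k : ℕ} (hk : 2 ≤ k) :
    gronwallMajorant η a v k =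
      a * v k + a * exp (-η * k) * ∑ m ∈ Icc 2 (k - 1), exp (η * m) * v m := by
  obtain ⟨n, rfl⟩ : ∃ n, k = n + 1 := ⟨k - 1, by omega⟩
  have hexp : exp (-η * ↑(n + 1)) * exp (η * ↑(n + 1)) = 1 := by rw [← exp_add]; simp
  rw [gronwallMajorant_eq, Nat.add_sub_cancel, sum_Icc_succ_top hk]
  linear_combination (a * v (n + 1)) * hexp

theorem gronwallMajorant_sub_le (ha : 0 ≤ a) (hv : ∀ k, 0 ≤ v k) {i k : ℕ} (hi : 1 ≤ i)
    (hik : i ≤ k) :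
    gronwallMajorant η a v (k - i) ≤
      exp (η * i) * (a * exp (-η * k) * ∑ m ∈ Icc 2 (k - 1), exp (η * m) * v m) := by
  have hexp : exp (-η * (k - i)) = exp (-η * k) * exp (η * i) := by rw [← exp_add]; ring_nf
  rw [gronwallMajorant_eq, Nat.cast_sub hik, hexp]
  calc a * (exp (-η * k) * exp (η * i)) * ∑ m ∈ Icc 2 (k - i), exp (η * m) * v m
      ≤ a * (exp (-η * k) * exp (η * i)) * ∑ m ∈ Icc 2 (k - 1), exp (η * m) * v m := by
        gcongr
        exact fun m _ _ ↦ mul_nonneg (exp_pos _).le (hv m)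
    _ = _ := by ring

theorem gronwallMajorant_supersolution {H : ℕ → ℝ} {k : ℕ} (ha : 0 ≤ a) (hv : ∀ k, 0 ≤ v k)
    (hH : ∀ i, 0 ≤ H i) (hk : 2 ≤ k) (hK : ∑ i ∈ Icc 1 (k - 2), exp (η * i) * H (i + 1) ≤ k) :
    ∑ i ∈ Icc 1 (k - 2), 1 / (k : ℝ) * H (i + 1) * gronwallMajorant η a v (k - i) + a * v k ≤
      gronwallMajorant η a v k := by
  set Q := a * exp (-η * k) * ∑ m ∈ Icc 2 (k - 1), exp (η * m) * v m
  have hQ : 0 ≤ Q := by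
    have := sum_nonneg fun m (_ : m ∈ Icc 2 (k - 1)) ↦ mul_nonneg (exp_pos (η * m)).le (hv m)
    positivity
  have hk0 : (0 : ℝ) < k := by positivity
  calc ∑ i ∈ Icc 1 (k - 2), 1 / (k : ℝ) * H (i + 1) * gronwallMajorant η a v (k - i) + a * v k
      ≤ ∑ i ∈ Icc 1 (k - 2), 1 / (k : ℝ) * H (i + 1) * (exp (η * i) * Q) + a * v k := by
        gcongr with i hi
        · exact mul_nonneg (by positivity) (hH _)
        · have := mem_Icc.mp hi
          exact gronwallMajorant_sub_le ha hv this.1 (by omega)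
    _ = 1 / k * (∑ i ∈ Icc 1 (k - 2), exp (η * i) * H (i + 1)) * Q + a * v k := by
        rw [mul_sum, sum_mul]
        congr 1
        exact sum_congr rfl fun i _ ↦ by ring
    _ ≤ 1 / k * k * Q + a * v k := by gcongr
    _ = gronwallMajorant η a v k := by
        rw [gronwallMajorant_eq_add hk, one_div_mul_cancel hk0.ne']
        ring

end gronwallMajorant

theorem sum_Icc_exp_mul_le_tsum {η : ℝ} {H : ℕ → ℝ} (hH : ∀ i, 0 ≤ H i)
    (hs : Summable fun i : ℕ ↦ exp (η * ((i : ℝ) + 1)) * H (i + 2)) (n : ℕ) :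
    ∑ i ∈ Icc 1 n, exp (η * i) * H (i + 1) ≤ ∑' i : ℕ, exp (η * ((i : ℝ) + 1)) * H (i + 2) := by
  calc ∑ i ∈ Icc 1 n, exp (η * i) * H (i + 1)
      = ∑ i ∈ range n, exp (η * ((i : ℝ) + 1)) * H (i + 2) := by
        rw [← Ico_add_one_right_eq_Icc, sum_Ico_eq_sum_range, Nat.add_sub_cancel]
        refine sum_congr rfl fun i _ ↦ ?_
        rw [add_comm 1 i]
        push_cast
        rfl
    _ ≤ _ := hs.sum_le_tsum _ fun i _ ↦ mul_nonneg (exp_pos _).le (hH _)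

theorem stmt14_general (η a : ℝ) (ha : 0 ≤ a)
    (v d h : ℕ → ℝ) (hv : ∀ k, 0 ≤ v k) (hh : ∀ j, 0 ≤ h j)
    (H : ℕ → ℝ) (hH : ∀ i, H i = ∑' j : ℕ, if i ≤ j then h j else 0)
    (k₀ : ℕ)
    (hk₀sum : Summable (fun i : ℕ => Real.exp (η * ((i : ℝ) + 1)) * H (i + 2)))
    (hk₀ : (∑' i : ℕ, Real.exp (η * ((i : ℝ) + 1)) * H (i + 2)) ≤ (k₀ : ℝ))
    (hrec : ∀ k, k₀ ≤ k → 2 ≤ k →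
      d k ≤ (1 / (k : ℝ)) * ∑ i ∈ Finset.Icc 1 (k - 2), H (i + 1) * d (k - i) + a * v k)
    (hbase : ∀ j, 2 ≤ j → j ≤ k₀ →
      d j ≤ a * ∑ i ∈ Finset.range (j - 1), Real.exp (-η * (i : ℝ)) * v (j - i)) :
    ∀ j, 2 ≤ j →
      d j ≤ a * ∑ i ∈ Finset.range (j - 1), Real.exp (-η * (i : ℝ)) * v (j - i) := by
  have hH₀ : ∀ i, 0 ≤ H i := fun i ↦
    (hH i).symm ▸ tsum_nonneg fun j ↦ by split_ifs <;> simp [hh j]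
  refine le_of_sub_super_solution (B := gronwallMajorant η a v) (e := fun k ↦ a * v k)
    (c := fun k i ↦ 1 / (k : ℝ) * H (i + 1)) (fun k i ↦ mul_nonneg (by positivity) (hH₀ _))
    (fun k hk hk2 ↦ ?_) (fun k hk hk2 ↦ ?_) hbase
  · simpa only [mul_sum, mul_assoc] using hrec k hk.le hk2
  · refine gronwallMajorant_supersolution ha hv hH₀ hk2 ?_
    calc _ ≤ _ := sum_Icc_exp_mul_le_tsum hH₀ hk₀sum (k - 2)
      _ ≤ k₀ := hk₀
      _ ≤ k := by exact_mod_cast hk.le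

/-- Discrete Gronwall-type induction: if a nonnegative sequence `d` satisfies
`d_k ≤ (1/k) ∑_{i=1}^{k-2} H_{i+1} d_{k-i} + a v_k` for `k ≥ k₀` with
`H_i = ∑_{j≥i} h_j`, `k₀ ≥ ∑_{i≥1} e^{ηi} H_{i+1}`, and the bound
`d_j ≤ a ∑_{i=0}^{j-2} e^{-ηi} v_{j-i}` holds for `2 ≤ j ≤ k₀`, then it holds
for all `j ≥ 2`. -/
theorem stmt14 (η a : ℝ) (hη : 0 < η) (ha : 0 ≤ a)
    (v d h : ℕ → ℝ) (hv : ∀ k, 0 ≤ v k) (hd : ∀ k, 0 ≤ d k) (hh : ∀ j, 0 ≤ h j)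
    (hhsum : Summable h)
    (H : ℕ → ℝ) (hH : ∀ i, H i = ∑' j : ℕ, if i ≤ j then h j else 0)
    (k₀ : ℕ)
    (hk₀sum : Summable (fun i : ℕ => Real.exp (η * ((i : ℝ) + 1)) * H (i + 2)))
    (hk₀ : (∑' i : ℕ, Real.exp (η * ((i : ℝ) + 1)) * H (i + 2)) ≤ (k₀ : ℝ))
    (hrec : ∀ k, k₀ ≤ k → 2 ≤ k →
      d k ≤ (1 / (k : ℝ)) * ∑ i ∈ Finset.Icc 1 (k - 2), H (i + 1) * d (k - i) + a * v k)
    (hbase : ∀ j, 2 ≤ j → j ≤ k₀ →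
      d j ≤ a * ∑ i ∈ Finset.range (j - 1), Real.exp (-η * (i : ℝ)) * v (j - i)) :
    ∀ j, 2 ≤ j →
      d j ≤ a * ∑ i ∈ Finset.range (j - 1), Real.exp (-η * (i : ℝ)) * v (j - i) :=
  stmt14_general η a ha v d h hv hh H hH k₀ hk₀sum hk₀ hrec hbase
end

section
/- Let A ∈ (0,1), b ≥ 2, θ ∈ (0,1) with bθ³ ≤ 1. Suppose λ : ℤ → (0,∞) is symmetric with λ(0)=1 and sup_{ℓ≥0} λ(ℓ+1)/λ(ℓ) ≤ Aε for some ε > 0 with Aε < 1. Define F_q(λ) := θ^{q²} G_q(λ)/G_0(λ) where G_q(λ) := ∑_{ℓ₁+⋯+ℓ_b=q} ∏_{i=1}^b λ(ℓ_i). Then sup_{q≥1} F_{q+1}(λ)/F_q(λ) ≤ b θ³ A ε ≤ A ε. -/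
/-!
Every composition `ℓ₁ + ⋯ + ℓ_b = q + 1` with `q ≥ 0` has a part `ℓᵢ ≥ 1`; lowering that part
by one injects the compositions of `q + 1` into `b` copies of the compositions of `q`, and the
ratio bound costs a factor `Aε` per term, so `G_{q+1} ≤ b A ε G_q`. The Gaussian weights give the
extra factor `θ^{(q+1)² - q²} = θ^{2q+1} ≤ θ³` for `q ≥ 1`.
-/

open Finset

section Compositions

variable {b : ℕ} {lam : ℤ → ℝ} {c : ℝ}

lemma prod_add_single_le (hpos : ∀ n, 0 ≤ lam n) (hratio : ∀ n : ℕ, lam (n + 1) ≤ c * lam n)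
    (m : Fin b → ℤ) (i : Fin b) (hi : 0 ≤ m i) :
    ∏ j, lam ((m + Pi.single i 1 : Fin b → ℤ) j) ≤ c * ∏ j, lam (m j) := by
  obtain ⟨n, hn⟩ := Int.eq_ofNat_of_zero_le hi
  have hrest : ∏ j ∈ univ.erase i, lam ((m + Pi.single i 1 : Fin b → ℤ) j) =
      ∏ j ∈ univ.erase i, lam (m j) :=
    prod_congr rfl fun j hj => by simp [Pi.single_eq_of_ne (ne_of_mem_erase hj)]
  rw [← mul_prod_erase univ _ (mem_univ i), ← mul_prod_erase univ _ (mem_univ i), hrest,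
    ← mul_assoc]
  gcongr
  · exact prod_nonneg fun j _ => hpos _
  · simpa [hn] using hratio n

lemma exists_pos_of_sum_pos {ι : Type*} [Fintype ι] {ℓ : ι → ℤ} (hℓ : 0 < ∑ i, ℓ i) :
    ∃ i, 0 < ℓ i := by
  obtain ⟨i, -, hi⟩ := exists_lt_of_sum_lt (s := univ) (f := 0) (g := ℓ) (by simpa using hℓ)
  exact ⟨i, hi⟩

noncomputable def lowerPart (t : ℕ) (ℓ : {ℓ : Fin b → ℤ // ∑ i, ℓ i = t + 1}) :
    Σ _ : Fin b, {m : Fin b → ℤ // ∑ i, m i = t} :=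
  let i := (exists_pos_of_sum_pos (by rw [ℓ.2]; positivity)).choose
  ⟨i, ℓ.1 - Pi.single i 1, by simp [sum_sub_distrib, ℓ.2]⟩

lemma lowerPart_spec (t : ℕ) (ℓ : {ℓ : Fin b → ℤ // ∑ i, ℓ i = t + 1}) :
    0 ≤ (lowerPart t ℓ).2.1 (lowerPart t ℓ).1 ∧
      ℓ.1 = (lowerPart t ℓ).2.1 + Pi.single (lowerPart t ℓ).1 1 := by
  have hi := (exists_pos_of_sum_pos (by rw [ℓ.2]; positivity)).choose_spec
  refine ⟨?_, by simp [lowerPart]⟩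
  simp only [lowerPart, Pi.sub_apply, Pi.single_eq_same]
  omega

lemma lowerPart_injective (t : ℕ) : Function.Injective (lowerPart (b := b) t) := by
  intro ℓ ℓ' h
  rw [Subtype.ext_iff, (lowerPart_spec t ℓ).2, (lowerPart_spec t ℓ').2, h]

lemma tsum_compositions_succ_le (hpos : ∀ n, 0 ≤ lam n) (hc : 0 ≤ c)
    (hratio : ∀ n : ℕ, lam (n + 1) ≤ c * lam n) (t : ℕ)
    (hsum : Summable fun ℓ : {ℓ : Fin b → ℤ // ∑ i, ℓ i = t} => ∏ i, lam (ℓ.1 i))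
    (hsum' : Summable fun ℓ : {ℓ : Fin b → ℤ // ∑ i, ℓ i = t + 1} => ∏ i, lam (ℓ.1 i)) :
    ∑' ℓ : {ℓ : Fin b → ℤ // ∑ i, ℓ i = t + 1}, ∏ i, lam (ℓ.1 i)
      ≤ b * c * ∑' ℓ : {ℓ : Fin b → ℤ // ∑ i, ℓ i = t}, ∏ i, lam (ℓ.1 i) := by
  set g := fun p : Σ _ : Fin b, {m : Fin b → ℤ // ∑ i, m i = t} => c * ∏ i, lam (p.2.1 i)
  have hg_nonneg : ∀ p, 0 ≤ g p := fun p => mul_nonneg hc (prod_nonneg fun i _ => hpos _)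
  have hg : Summable g :=
    (summable_sigma_of_nonneg hg_nonneg).2 ⟨fun _ => hsum.mul_left c, Summable.of_finite⟩
  have hle : ∀ ℓ : {ℓ : Fin b → ℤ // ∑ i, ℓ i = t + 1}, ∏ i, lam (ℓ.1 i) ≤ g (lowerPart t ℓ) := by
    intro ℓ
    obtain ⟨hpart, hℓ⟩ := lowerPart_spec t ℓ
    rw [hℓ]
    exact prod_add_single_le hpos hratio _ _ hpart
  calc ∑' ℓ : {ℓ : Fin b → ℤ // ∑ i, ℓ i = t + 1}, ∏ i, lam (ℓ.1 i)
      ≤ ∑' p, g p :=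
        hsum'.tsum_le_tsum_of_inj _ (lowerPart_injective t) (fun p _ => hg_nonneg p) hle hg
    _ = b * c * ∑' ℓ : {ℓ : Fin b → ℤ // ∑ i, ℓ i = t}, ∏ i, lam (ℓ.1 i) := by
        rw [hg.tsum_sigma, tsum_fintype]
        simp [g, tsum_mul_left, mul_assoc]

end Compositions

theorem stmt18_general (b : ℕ) (θ A ε : ℝ) (hθ0 : 0 < θ) (hθ1 : θ < 1)
    (hbθ : (b : ℝ) * θ ^ 3 ≤ 1) (hA0 : 0 < A)
    (hε : 0 < ε)
    (lam : ℤ → ℝ) (hpos : ∀ q : ℤ, 0 < lam q)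
    (hratio : ∀ ℓ : ℕ, lam ((ℓ : ℤ) + 1) / lam ℓ ≤ A * ε)
    (G : ℤ → ℝ)
    (hG : ∀ q : ℤ, G q = ∑' ℓ : {ℓ : Fin b → ℤ // ∑ i, ℓ i = q}, ∏ i, lam (ℓ.1 i))
    (hsum : ∀ q : ℤ,
      Summable (fun ℓ : {ℓ : Fin b → ℤ // ∑ i, ℓ i = q} => ∏ i, lam (ℓ.1 i)))
    (F : ℕ → ℝ) (hF : ∀ q : ℕ, F q = θ ^ (q ^ 2) * G q / G 0) :
    ∀ q : ℕ, 1 ≤ q →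
      F (q + 1) / F q ≤ (b : ℝ) * θ ^ 3 * (A * ε) ∧
        (b : ℝ) * θ ^ 3 * (A * ε) ≤ A * ε := by
  intro q hq
  have hAε : 0 ≤ A * ε := (mul_pos hA0 hε).le
  have hG_nonneg (t : ℤ) : 0 ≤ G t :=
    (hG t).symm ▸ tsum_nonneg fun ℓ => prod_nonneg fun i _ => (hpos _).le
  have hG_succ : G (q + 1) ≤ b * (A * ε) * G q := by
    rw [hG, hG]
    exact tsum_compositions_succ_le (fun n => (hpos n).le) hAε
      (fun n => (div_le_iff₀ (hpos n)).1 (hratio n)) q (hsum q) (hsum (q + 1))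
  have hθ_pow : θ ^ ((q + 1) ^ 2) ≤ θ ^ 3 * θ ^ (q ^ 2) := by
    rw [show (q + 1) ^ 2 = (2 * q + 1) + q ^ 2 by ring, pow_add]
    exact mul_le_mul_of_nonneg_right (pow_le_pow_of_le_one hθ0.le hθ1.le (by omega))
      (by positivity)
  have hF_nonneg : 0 ≤ F q := by
    rw [hF]
    exact div_nonneg (mul_nonneg (by positivity) (hG_nonneg _)) (hG_nonneg 0)
  have hF_succ : F (q + 1) ≤ b * θ ^ 3 * (A * ε) * F q := by
    rw [hF, hF]
    push_cast
    calc θ ^ ((q + 1) ^ 2) * G (q + 1) / G 0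
        ≤ θ ^ 3 * θ ^ (q ^ 2) * (b * (A * ε) * G q) / G 0 := by
          gcongr
          · exact hG_nonneg 0
          · exact hG_nonneg _
      _ = b * θ ^ 3 * (A * ε) * (θ ^ (q ^ 2) * G q / G 0) := by ring
  refine ⟨div_le_of_le_mul₀ hF_nonneg (by positivity) hF_succ, ?_⟩
  simpa using mul_le_mul_of_nonneg_right hbθ hAε

/-- Preservation of geometric ratio decay by the renormalization map (Eq. 6.56):
for `λ` symmetric positive with `λ(0)=1` and `sup_{ℓ≥0} λ(ℓ+1)/λ(ℓ) ≤ Aε`, the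
map `F_q(λ) = θ^{q²} G_q(λ)/G_0(λ)` satisfies
`F_{q+1}(λ)/F_q(λ) ≤ b θ³ A ε ≤ A ε` for `q ≥ 1`, provided `bθ³ ≤ 1`. -/
theorem stmt18 (b : ℕ) (hb : 2 ≤ b) (θ A ε : ℝ) (hθ0 : 0 < θ) (hθ1 : θ < 1)
    (hbθ : (b : ℝ) * θ ^ 3 ≤ 1) (hA0 : 0 < A) (hA1 : A < 1)
    (hε : 0 < ε) (hAε : A * ε < 1)
    (lam : ℤ → ℝ) (hpos : ∀ q : ℤ, 0 < lam q) (hsym : ∀ q : ℤ, lam (-q) = lam q)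
    (hlam0 : lam 0 = 1)
    (hratio : ∀ ℓ : ℕ, lam ((ℓ : ℤ) + 1) / lam ℓ ≤ A * ε)
    (G : ℤ → ℝ)
    (hG : ∀ q : ℤ, G q = ∑' ℓ : {ℓ : Fin b → ℤ // ∑ i, ℓ i = q}, ∏ i, lam (ℓ.1 i))
    (hsum : ∀ q : ℤ,
      Summable (fun ℓ : {ℓ : Fin b → ℤ // ∑ i, ℓ i = q} => ∏ i, lam (ℓ.1 i)))
    (F : ℕ → ℝ) (hF : ∀ q : ℕ, F q = θ ^ (q ^ 2) * G q / G 0) :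
    ∀ q : ℕ, 1 ≤ q →
      F (q + 1) / F q ≤ (b : ℝ) * θ ^ 3 * (A * ε) ∧
        (b : ℝ) * θ ^ 3 * (A * ε) ≤ A * ε :=
  stmt18_general b θ A ε hθ0 hθ1 hbθ hA0 hε lam hpos hratio G hG hsum F hF
end
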